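/- In the symplectic Weyl-algebra setting, for any integers n ≥ 1, k ≥ 0, a ≥ 0 and index 1 ≤ j ≤ n, the deformed raising operator Z_j^{[k]} := X_s²·∂_{x_j} - i·y_j·(E + n - k)·(2E + 2n - 1 - 2k) - i·X_s·q_j·(2E + 2n - 1 - 2k) satisfies, as operators on ker D_s: Z_j^{[k]}·X_s^a = X_s^a·(Z_j^{[0]} + Ψ_j) on ker D_s, where Ψ_j := -i·y_j·(2(a-2k)·E + γ(n,k,a)) - i·X_s·q_j·(a - 2k) and γ(n,k,a) = k - 2ak + 2k² + 2an - 4kn + a(a-1)/2. -/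
import Mathlib


/- The complexified Weyl algebra on variables x_1,…,x_n, y_1,…,y_n, q_1,…,q_n,
   realized faithfully as operators on the polynomial space
   ℂ[x_1,…,q_n]; a variable is indexed by a pair `(t, j) : Fin 3 × Fin n`
   with `t = 0` for `x_j`, `t = 1` for `y_j`, `t = 2` for `q_j`. -/

noncomputable section

open MvPolynomial

variable (n : ℕ)

/-- Multiplication by the variable `v`. -/
def mulOp (v : Fin 3 × Fin n) : Module.End ℂ (MvPolynomial (Fin 3 × Fin n) ℂ) :=
  LinearMap.mulLeft ℂ (X v)

/-- Partial derivative with respect to the variable `v`. -/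
def derOp (v : Fin 3 × Fin n) : Module.End ℂ (MvPolynomial (Fin 3 × Fin n) ℂ) :=
  (pderiv v).toLinearMap

/-- The symplectic creation operator `X_s = Σ_j (y_j·∂_{q_j} + i·x_j·q_j)`. -/
def Xs : Module.End ℂ (MvPolynomial (Fin 3 × Fin n) ℂ) :=
  ∑ j : Fin n, (mulOp n (1, j) * derOp n (2, j) + Complex.I • (mulOp n (0, j) * mulOp n (2, j)))

/-- The symplectic Dirac operator `D_s = Σ_j (i·q_j·∂_{y_j} - ∂_{x_j}·∂_{q_j})`. -/
def Ds : Module.End ℂ (MvPolynomial (Fin 3 × Fin n) ℂ) :=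
  ∑ j : Fin n, (Complex.I • (mulOp n (2, j) * derOp n (1, j)) - derOp n (0, j) * derOp n (2, j))

/-- The Euler operator `E = Σ_j (x_j·∂_{x_j} + y_j·∂_{y_j})`. -/
def euler : Module.End ℂ (MvPolynomial (Fin 3 × Fin n) ℂ) :=
  ∑ j : Fin n, (mulOp n (0, j) * derOp n (0, j) + mulOp n (1, j) * derOp n (1, j))

/-- The deformed raising operator
`Z_j^{[k]} = X_s²·∂_{x_j} - i·y_j·(E + n - k)·(2E + 2n - 1 - 2k) - i·X_s·q_j·(2E + 2n - 1 - 2k)`. -/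
def Zop (k : ℕ) (j : Fin n) : Module.End ℂ (MvPolynomial (Fin 3 × Fin n) ℂ) :=
  Xs n ^ 2 * derOp n (0, j)
    - Complex.I • (mulOp n (1, j) * ((euler n + ((n : ℂ) - (k : ℂ)) • 1) *
        ((2 : ℂ) • euler n + (2 * (n : ℂ) - 1 - 2 * (k : ℂ)) • 1)))
    - Complex.I • (Xs n * mulOp n (2, j) * ((2 : ℂ) • euler n + (2 * (n : ℂ) - 1 - 2 * (k : ℂ)) • 1))

namespace WSA

variable {n}

lemma pderiv_pderiv_comm (v w : Fin 3 × Fin n) (p : MvPolynomial (Fin 3 × Fin n) ℂ) :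
    pderiv v (pderiv w p) = pderiv w (pderiv v p) := by
  induction p using MvPolynomial.induction_on with
  | C a => simp
  | add p q hp hq => simp [hp, hq]
  | mul_X p k ih =>
      simp [pderiv_mul, ih, pderiv_X, Pi.single_apply]
      split_ifs <;> (try simp) <;> (try ring)

lemma B1 (v w : Fin 3 × Fin n) : mulOp n v * mulOp n w = mulOp n w * mulOp n v := by
  refine LinearMap.ext fun p => ?_; simp [mulOp]; ring

lemma B3 (v w : Fin 3 × Fin n) : derOp n v * derOp n w = derOp n w * derOp n v := by
  refine LinearMap.ext fun p => ?_; simp [derOp, pderiv_pderiv_comm]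

lemma B2 (v w : Fin 3 × Fin n) :
    derOp n v * mulOp n w = mulOp n w * derOp n v + if v = w then 1 else 0 := by
  by_cases h : v = w
  · subst h; simp only [if_pos rfl]; refine LinearMap.ext fun p => ?_
    simp [derOp, mulOp, pderiv_mul]
  · simp only [if_neg h, add_zero]; refine LinearMap.ext fun p => ?_
    simp [derOp, mulOp, pderiv_mul, pderiv_X, Pi.single_apply, Ne.symm h]

-- commutator lemmas: [M v * D w, M u] etc.
lemma A0 (v w u : Fin 3 × Fin n) :
    mulOp n u * (mulOp n v * mulOp n w) - (mulOp n v * mulOp n w) * mulOp n u = 0 := by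
  rw [← mul_assoc, B1 u v, mul_assoc, B1 u w, ← mul_assoc, sub_self]

lemma A1 (v w u : Fin 3 × Fin n) :
    (mulOp n v * derOp n w) * mulOp n u - mulOp n u * (mulOp n v * derOp n w)
      = if w = u then mulOp n v else 0 := by
  rw [mul_assoc, B2, mul_add, ← mul_assoc, B1 v u, mul_assoc]
  simp [mul_ite]

lemma A2 (v w u : Fin 3 × Fin n) :
    derOp n u * (mulOp n v * derOp n w) - (mulOp n v * derOp n w) * derOp n u
      = if u = v then derOp n w else 0 := by
  rw [← mul_assoc, B2 u v, add_mul, mul_assoc, B3 u w, ← mul_assoc, mul_assoc]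
  simp [ite_mul]

lemma A3 (v w u : Fin 3 × Fin n) :
    derOp n u * (mulOp n v * mulOp n w) - (mulOp n v * mulOp n w) * derOp n u
      = (if u = w then mulOp n v else 0) + (if u = v then mulOp n w else 0) := by
  rw [← mul_assoc, B2 u v, add_mul, mul_assoc, B2 u w, mul_add]
  simp only [mul_ite, mul_one, mul_zero, ite_mul, one_mul, zero_mul, ← mul_assoc]
  abel

lemma A4 (v w v' w' : Fin 3 × Fin n) :
    (mulOp n v * derOp n w) * (mulOp n v' * derOp n w')
      - (mulOp n v' * derOp n w') * (mulOp n v * derOp n w)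
      = (if w = v' then mulOp n v * derOp n w' else 0)
        - (if w' = v then mulOp n v' * derOp n w else 0) := by
  rw [mul_assoc, ← mul_assoc (derOp n w), B2 w v', add_mul, mul_assoc (mulOp n v'),
    B3 w w']
  rw [mul_assoc (mulOp n v') (derOp n w'), ← mul_assoc (derOp n w'), B2 w' v, add_mul]
  simp only [mul_add, add_mul, ite_mul, mul_ite, one_mul, mul_one, zero_mul, mul_zero]
  rw [← mul_assoc (mulOp n v) (mulOp n v'), B1 v v']
  simp only [mul_assoc]
  abel

lemma A5 (v w v' w' : Fin 3 × Fin n) :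
    (mulOp n v * derOp n w) * (mulOp n v' * mulOp n w')
      - (mulOp n v' * mulOp n w') * (mulOp n v * derOp n w)
      = (if w = v' then mulOp n v * mulOp n w' else 0)
        + (if w = w' then mulOp n v * mulOp n v' else 0) := by
  rw [mul_assoc, ← mul_assoc (derOp n w), B2 w v', add_mul, mul_assoc (mulOp n v'),
    B2 w w', mul_add]
  simp only [mul_add, add_mul, ite_mul, mul_ite, one_mul, mul_one, zero_mul, mul_zero]
  rw [← mul_assoc (mulOp n v) (mulOp n v'), B1 v v', ← mul_assoc (mulOp n v' * mulOp n v),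
    mul_assoc (mulOp n v') (mulOp n v) (mulOp n w'), B1 v w']
  simp only [mul_assoc]
  abel

lemma comm_sum {ι : Type*} (s : Finset ι) (T : ι → Module.End ℂ (MvPolynomial (Fin 3 × Fin n) ℂ))
    (C : Module.End ℂ (MvPolynomial (Fin 3 × Fin n) ℂ)) :
    C * (∑ l ∈ s, T l) = (∑ l ∈ s, T l) * C + ∑ l ∈ s, (C * T l - T l * C) := by
  rw [Finset.mul_sum, Finset.sum_mul, ← Finset.sum_add_distrib]
  exact Finset.sum_congr rfl fun l _ => by abel


lemma split2 (C t1 t2 : Module.End ℂ (MvPolynomial (Fin 3 × Fin n) ℂ)) (c : ℂ) :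
    C * (t1 + c • t2) - (t1 + c • t2) * C
      = (C * t1 - t1 * C) + c • (C * t2 - t2 * C) := by
  simp only [mul_add, add_mul, mul_smul_comm, smul_mul_assoc, smul_sub]; abel

lemma split22 (s1 s2 t1 t2 : Module.End ℂ (MvPolynomial (Fin 3 × Fin n) ℂ)) (c : ℂ) :
    (s1 + s2) * (t1 + c • t2) - (t1 + c • t2) * (s1 + s2)
      = (s1 * t1 - t1 * s1) + (s2 * t1 - t1 * s2)
        + c • (s1 * t2 - t2 * s1) + c • (s2 * t2 - t2 * s2) := by
  simp only [mul_add, add_mul, mul_smul_comm, smul_mul_assoc, smul_sub, smul_add]; abel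

def TX (l : Fin n) : Module.End ℂ (MvPolynomial (Fin 3 × Fin n) ℂ) :=
  mulOp n (1, l) * derOp n (2, l) + Complex.I • (mulOp n (0, l) * mulOp n (2, l))

def SE (m : Fin n) : Module.End ℂ (MvPolynomial (Fin 3 × Fin n) ℂ) :=
  mulOp n (0, m) * derOp n (0, m) + mulOp n (1, m) * derOp n (1, m)

lemma Xs_eq : Xs n = ∑ l : Fin n, TX l := rfl

lemma euler_eq : euler n = ∑ m : Fin n, SE m := rfl

lemma R1 (j : Fin n) : mulOp n (2, j) * Xs n = Xs n * mulOp n (2, j) - mulOp n (1, j) := by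
  rw [Xs_eq, comm_sum]
  have h : ∀ l : Fin n, mulOp n (2, j) * TX l - TX l * mulOp n (2, j)
      = if l = j then -(mulOp n (1, l)) else 0 := by
    intro l
    rw [TX, split2, A0, smul_zero, add_zero,
      show mulOp n (2, j) * (mulOp n (1, l) * derOp n (2, l))
          - (mulOp n (1, l) * derOp n (2, l)) * mulOp n (2, j)
        = -((mulOp n (1, l) * derOp n (2, l)) * mulOp n (2, j)
          - mulOp n (2, j) * (mulOp n (1, l) * derOp n (2, l))) from by abel,
      A1]
    simp only [Prod.mk.injEq, true_and]
    split_ifs <;> simp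
  rw [Finset.sum_congr rfl fun l _ => h l]
  simp [sub_eq_add_neg]

lemma R2 (j : Fin n) :
    derOp n (0, j) * Xs n = Xs n * derOp n (0, j) + Complex.I • mulOp n (2, j) := by
  rw [Xs_eq, comm_sum]
  have h : ∀ l : Fin n, derOp n (0, j) * TX l - TX l * derOp n (0, j)
      = if l = j then Complex.I • mulOp n (2, l) else 0 := by
    intro l
    rw [TX, split2, A2, A3]
    simp only [Prod.mk.injEq, show ((0 : Fin 3) = 1) = False by simp,
      show ((0 : Fin 3) = 2) = False by simp, false_and, if_false, add_zero, zero_add,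
      true_and, smul_add, smul_zero]
    rcases eq_or_ne l j with rfl | hne
    · simp
    · simp [hne, Ne.symm hne]
  rw [Finset.sum_congr rfl fun l _ => h l]
  simp

lemma R3 (j : Fin n) : mulOp n (1, j) * Xs n = Xs n * mulOp n (1, j) := by
  rw [Xs_eq, comm_sum]
  have h : ∀ l : Fin n, mulOp n (1, j) * TX l - TX l * mulOp n (1, j) = 0 := by
    intro l
    rw [TX, split2, A0, smul_zero, add_zero,
      show mulOp n (1, j) * (mulOp n (1, l) * derOp n (2, l))
          - (mulOp n (1, l) * derOp n (2, l)) * mulOp n (1, j)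
        = -((mulOp n (1, l) * derOp n (2, l)) * mulOp n (1, j)
          - mulOp n (1, j) * (mulOp n (1, l) * derOp n (2, l))) from by abel,
      A1]
    simp [Prod.mk.injEq]
  rw [Finset.sum_congr rfl fun l _ => h l]
  simp

lemma c_ES (m l : Fin n) : SE m * TX l - TX l * SE m = if m = l then TX l else 0 := by
  rw [SE, TX, split22, A4, A4, A5, A5]
  simp only [Prod.mk.injEq, show ((0 : Fin 3) = 1) = False by simp,
    show ((0 : Fin 3) = 2) = False by simp, show ((1 : Fin 3) = 0) = False by simp,
    show ((1 : Fin 3) = 2) = False by simp, show ((2 : Fin 3) = 0) = False by simp,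
    show ((2 : Fin 3) = 1) = False by simp, false_and, if_false, true_and,
    sub_zero, add_zero, zero_add, smul_add, smul_zero]
  rcases eq_or_ne m l with rfl | hne
  · simp [TX]
  · simp [hne]

lemma c_E (l : Fin n) : euler n * TX l - TX l * euler n = TX l := by
  have h := comm_sum Finset.univ SE (TX l)
  have hs : (∑ m : Fin n, (TX l * SE m - SE m * TX l)) = -(TX l) := by
    rw [Finset.sum_congr rfl fun m _ =>
      show TX l * SE m - SE m * TX l = -(if m = l then TX l else 0) from by
        rw [← c_ES]; abel]
    simp
  rw [euler_eq, h, hs]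
  abel

lemma R4 : euler n * Xs n = Xs n * euler n + Xs n := by
  rw [Xs_eq, euler_eq]
  rw [comm_sum]
  rw [Finset.sum_congr rfl fun l _ =>
    show (∑ m : Fin n, SE m) * TX l - TX l * (∑ m : Fin n, SE m) = TX l from by
      rw [← euler_eq]; exact c_E l]


lemma lin1 (c : ℂ) : (euler n + c • 1) * Xs n = Xs n * (euler n + (c + 1) • 1) := by
  rw [add_mul, R4, smul_mul_assoc, one_mul, mul_add, mul_smul_comm, mul_one]
  module

lemma lin2 (c : ℂ) :
    ((2 : ℂ) • euler n + c • 1) * Xs n = Xs n * ((2 : ℂ) • euler n + (c + 2) • 1) := by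
  rw [add_mul, smul_mul_assoc, R4, smul_mul_assoc, one_mul, mul_add, mul_smul_comm,
    mul_smul_comm, mul_one]
  module

lemma lin3 (α c : ℂ) :
    ((2 * α) • euler n + c • 1) * Xs n = Xs n * ((2 * α) • euler n + (c + 2 * α) • 1) := by
  rw [add_mul, smul_mul_assoc, R4, smul_mul_assoc, one_mul, mul_add, mul_smul_comm,
    mul_smul_comm, mul_one]
  module

lemma L1 (j : Fin n) : (Xs n ^ 2 * derOp n (0, j)) * Xs n
    = Xs n * (Xs n ^ 2 * derOp n (0, j)) + Complex.I • (Xs n ^ 2 * mulOp n (2, j)) := by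
  rw [mul_assoc, R2]
  simp only [pow_succ, pow_zero, one_mul, mul_add, mul_smul_comm, mul_assoc]
  try module

lemma L2 (j : Fin n) (c d : ℂ) :
    (mulOp n (1, j) * ((euler n + c • 1) * ((2 : ℂ) • euler n + d • 1))) * Xs n
      = Xs n * (mulOp n (1, j) * ((euler n + (c + 1) • 1) * ((2 : ℂ) • euler n + (d + 2) • 1))) := by
  rw [mul_assoc, mul_assoc, lin2, ← mul_assoc (euler n + c • 1), lin1,
    mul_assoc (Xs n), ← mul_assoc (mulOp n (1, j)) (Xs n), R3, mul_assoc]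

lemma L3 (j : Fin n) (d : ℂ) :
    (Xs n * mulOp n (2, j) * ((2 : ℂ) • euler n + d • 1)) * Xs n
      = Xs n * (Xs n * mulOp n (2, j) * ((2 : ℂ) • euler n + (d + 2) • 1))
        - Xs n * (mulOp n (1, j) * ((2 : ℂ) • euler n + (d + 2) • 1)) := by
  rw [mul_assoc, mul_assoc, lin2, ← mul_assoc (mulOp n (2, j)), R1, sub_mul, mul_sub]

lemma L4 (j : Fin n) (α β : ℂ) :
    (mulOp n (1, j) * ((2 * α) • euler n + β • 1)) * Xs n
      = Xs n * (mulOp n (1, j) * ((2 * α) • euler n + (β + 2 * α) • 1)) := by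
  rw [mul_assoc, lin3, ← mul_assoc, R3, mul_assoc]

lemma L5 (j : Fin n) (α : ℂ) :
    (α • (Xs n * mulOp n (2, j))) * Xs n
      = α • (Xs n * (Xs n * mulOp n (2, j))) - α • (Xs n * mulOp n (1, j)) := by
  rw [smul_mul_assoc, mul_assoc, R1, mul_sub, smul_sub, ← mul_assoc]


def Zc (c : ℂ) (j : Fin n) : Module.End ℂ (MvPolynomial (Fin 3 × Fin n) ℂ) :=
  Xs n ^ 2 * derOp n (0, j)
    - Complex.I • (mulOp n (1, j) * ((euler n + ((n : ℂ) - c) • 1) *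
        ((2 : ℂ) • euler n + (2 * (n : ℂ) - 1 - 2 * c) • 1)))
    - Complex.I • (Xs n * mulOp n (2, j) * ((2 : ℂ) • euler n + (2 * (n : ℂ) - 1 - 2 * c) • 1))

def Wab (α β : ℂ) (j : Fin n) : Module.End ℂ (MvPolynomial (Fin 3 × Fin n) ℂ) :=
  -Complex.I • (mulOp n (1, j) * ((2 * α) • euler n + β • 1))
    - Complex.I • (α • (Xs n * mulOp n (2, j)))

lemma key_comm (j : Fin n) (α β : ℂ) :
    (Zc 0 j + Wab α β j) * Xs n
      = Xs n * (Zc 0 j + Wab (α + 1) (β + α + 2 * (n : ℂ)) j) := by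
  unfold Zc Wab
  rw [add_mul, sub_mul, sub_mul, sub_mul, smul_mul_assoc, smul_mul_assoc, smul_mul_assoc,
    smul_mul_assoc]
  rw [L1 j, L2 j ((n : ℂ) - 0) (2 * (n : ℂ) - 1 - 2 * 0), L3 j (2 * (n : ℂ) - 1 - 2 * 0),
    L4 j α β, L5 j α]
  simp only [pow_succ, pow_zero, one_mul, mul_one, mul_add, add_mul, mul_sub, sub_mul,
    smul_add, smul_sub, smul_smul, smul_neg, neg_smul, mul_smul_comm, smul_mul_assoc,
    mul_assoc]
  module

lemma base (c : ℂ) (j : Fin n) :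
    Zc c j = Zc 0 j + Wab (-(2 * c)) (c + 2 * c ^ 2 - 4 * c * (n : ℂ)) j := by
  unfold Zc Wab
  simp only [one_mul, mul_one, mul_add, add_mul, mul_sub, sub_mul, smul_add, smul_sub,
    smul_smul, smul_neg, neg_smul, mul_smul_comm, smul_mul_assoc, mul_assoc]
  module

lemma main (c : ℂ) (j : Fin n) (a : ℕ) :
    Zc c j * Xs n ^ a
      = Xs n ^ a * (Zc 0 j + Wab ((a : ℂ) - 2 * c)
          (c - 2 * (a : ℂ) * c + 2 * c ^ 2 + 2 * (a : ℂ) * (n : ℂ) - 4 * c * (n : ℂ)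
            + (a : ℂ) * ((a : ℂ) - 1) / 2) j) := by
  induction a with
  | zero =>
      rw [pow_zero, mul_one, one_mul, base c j]
      rw [show ((0 : ℕ) : ℂ) - 2 * c = -(2 * c) by push_cast; ring]
      rw [show c - 2 * ((0 : ℕ) : ℂ) * c + 2 * c ^ 2 + 2 * ((0 : ℕ) : ℂ) * (n : ℂ)
            - 4 * c * (n : ℂ) + ((0 : ℕ) : ℂ) * (((0 : ℕ) : ℂ) - 1) / 2
          = c + 2 * c ^ 2 - 4 * c * (n : ℂ) by push_cast; ring]
  | succ a ih =>
      rw [pow_succ, ← mul_assoc, ih, mul_assoc, key_comm j, ← mul_assoc, ← pow_succ]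
      rw [show (a : ℂ) - 2 * c + 1 = ((a + 1 : ℕ) : ℂ) - 2 * c by push_cast; ring]
      rw [show c - 2 * (a : ℂ) * c + 2 * c ^ 2 + 2 * (a : ℂ) * (n : ℂ) - 4 * c * (n : ℂ)
            + (a : ℂ) * ((a : ℂ) - 1) / 2 + ((a : ℂ) - 2 * c) + 2 * (n : ℂ)
          = c - 2 * ((a + 1 : ℕ) : ℂ) * c + 2 * c ^ 2 + 2 * ((a + 1 : ℕ) : ℂ) * (n : ℂ)
            - 4 * c * (n : ℂ) + ((a + 1 : ℕ) : ℂ) * (((a + 1 : ℕ) : ℂ) - 1) / 2 by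
        push_cast; ring]

end WSA

/-- For any `n ≥ 1`, `k ≥ 0`, `a ≥ 0` and index `j`, the deformed raising operator
satisfies `Z_j^{[k]}·X_s^a = X_s^a·(Z_j^{[0]} + Ψ_j)` as operators on `ker D_s`, where
`Ψ_j = -i·y_j·(2(a-2k)·E + γ(n,k,a)) - i·X_s·q_j·(a - 2k)` and
`γ(n,k,a) = k - 2ak + 2k² + 2an - 4kn + a(a-1)/2`. -/
theorem deformed_raising_on_ker (hn : 1 ≤ n) (k a : ℕ) (j : Fin n) :
    letI γ : ℂ := (k : ℂ) - 2 * (a : ℂ) * (k : ℂ) + 2 * (k : ℂ) ^ 2 + 2 * (a : ℂ) * (n : ℂ)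
      - 4 * (k : ℂ) * (n : ℂ) + (a : ℂ) * ((a : ℂ) - 1) / 2
    letI Ψ : Module.End ℂ (MvPolynomial (Fin 3 × Fin n) ℂ) :=
      -Complex.I • (mulOp n (1, j) * ((2 * ((a : ℂ) - 2 * (k : ℂ))) • euler n + γ • 1))
        - Complex.I • (((a : ℂ) - 2 * (k : ℂ)) • (Xs n * mulOp n (2, j)))
    ∀ f : MvPolynomial (Fin 3 × Fin n) ℂ, Ds n f = 0 →
      (Zop n k j * Xs n ^ a) f = (Xs n ^ a * (Zop n 0 j + Ψ)) f := by
  intro f _hf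
  have h0 : Zop n 0 j = WSA.Zc 0 j := by
    rw [show Zop n 0 j = WSA.Zc ((0 : ℕ) : ℂ) j from rfl, Nat.cast_zero]
  have H := WSA.main (n := n) ((k : ℕ) : ℂ) j a
  rw [show Zop n k j = WSA.Zc ((k : ℕ) : ℂ) j from rfl, H, h0]
  rfl

end
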